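/- If an HC tree T is locally optimal with respect to the interchange operation for a symmetric similarity function w, then every subtree of T (viewed as an HC tree on its own leaf set, with w restricted to that leaf set) is also locally optimal with respect to the interchange operation. -/
import Mathlib


/-- A (rooted, full) binary tree with leaves labeled by elements of `α`. -/
inductive HCTree (α : Type) : Type
  | leaf : α → HCTree α
  | node : HCTree α → HCTree α → HCTree α
  deriving DecidableEq

namespace HCTree

variable {α : Type} [DecidableEq α]

/-- The set of leaf labels of a tree. -/
def leaves : HCTree α → Finset α
  | leaf a => {a}
  | node l r => leaves l ∪ leaves r

/-- The tree is a valid HC tree: all leaf labels are pairwise distinct. -/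
def Proper : HCTree α → Prop
  | leaf _ => True
  | node l r => Proper l ∧ Proper r ∧ Disjoint (leaves l) (leaves r)

/-- The number of leaves of the subtree rooted at the lowest common ancestor
of the leaves `i` and `j` (i.e. `|T_{i,j}|`). -/
def lcaSize : HCTree α → α → α → ℕ
  | leaf _, _, _ => 1
  | node l r, i, j =>
      if i ∈ leaves l ∧ j ∈ leaves l then lcaSize l i j
      else if i ∈ leaves r ∧ j ∈ leaves r then lcaSize r i j
      else (leaves l ∪ leaves r).card

/-- `Σ_{i<j, i,j ∈ L} w i j`. -/
noncomputable def pairsSum [LinearOrder α] (w : α → α → ℝ) (L : Finset α) : ℝ :=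
  ∑ i ∈ L, ∑ j ∈ L, if i < j then w i j else 0

/-- Moseley–Wang revenue of `T` with respect to its own leaf set:
`rev(T) = Σ_{i<j} w(i,j) (|L| - |T_{i,j}|)`. -/
noncomputable def rev [LinearOrder α] (w : α → α → ℝ) (T : HCTree α) : ℝ :=
  ∑ i ∈ T.leaves, ∑ j ∈ T.leaves,
    if i < j then w i j * ((T.leaves.card : ℝ) - (T.lcaSize i j : ℝ)) else 0

/-- Dasgupta cost: `cost(T) = Σ_{i<j} w(i,j) |T_{i,j}|`. -/
noncomputable def cost [LinearOrder α] (w : α → α → ℝ) (T : HCTree α) : ℝ :=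
  ∑ i ∈ T.leaves, ∑ j ∈ T.leaves,
    if i < j then w i j * (T.lcaSize i j : ℝ) else 0

/-- `w(A,B) = Σ_{i∈A, j∈B} w(i,j)`. -/
noncomputable def wSet (w : α → α → ℝ) (A B : Finset α) : ℝ := ∑ i ∈ A, ∑ j ∈ B, w i j

/-- One-hole contexts for `HCTree`. -/
inductive Ctx (α : Type) : Type
  | hole : Ctx α
  | nodeL : Ctx α → HCTree α → Ctx α
  | nodeR : HCTree α → Ctx α → Ctx α

/-- Filling the hole of a context with a tree. -/
def Ctx.fill {α : Type} : Ctx α → HCTree α → HCTree α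
  | Ctx.hole, T => T
  | Ctx.nodeL K r, T => node (Ctx.fill K T) r
  | Ctx.nodeR l K, T => node l (Ctx.fill K T)

/-- Equality of HC trees as *unordered* trees (children of a node are unordered). -/
inductive TEq : HCTree α → HCTree α → Prop
  | leaf (a : α) : TEq (leaf a) (leaf a)
  | node {l r l' r' : HCTree α} : TEq l l' → TEq r r' → TEq (node l r) (node l' r')
  | swap {l r l' r' : HCTree α} : TEq l r' → TEq r l' → TEq (node l r) (node l' r')

/-- `T'` is obtained from `T` by a single interchange operation: at an edge `(x,y)`
where `x` is internal with parent `y`, the subtrees rooted at the children of `x`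
have leaf sets `A` and `B`, and the other child of `y` has leaf set `C`; the
operation swaps the `B`-subtree with the `C`-subtree, or the `A`-subtree with
the `C`-subtree. -/
def Interchange {α : Type} (T T' : HCTree α) : Prop :=
  ∃ (K : Ctx α) (A B C : HCTree α),
    T = K.fill (node (node A B) C) ∧
    (T' = K.fill (node (node A C) B) ∨ T' = K.fill (node (node C B) A))

/-- `T` is locally optimal: no interchange, performed on any presentation `S` of
`T` as an unordered tree, strictly increases the revenue. -/
def LocalOpt [LinearOrder α] (w : α → α → ℝ) (T : HCTree α) : Prop :=
  ∀ S S' : HCTree α, TEq T S → Interchange S S' → rev w S' ≤ rev w T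

/-- One step of local search: an interchange, up to unordered-tree equality. -/
def IStep (T T' : HCTree α) : Prop :=
  ∃ S S' : HCTree α, TEq T S ∧ Interchange S S' ∧ TEq S' T'

/-- The interchange distance: minimum number of interchange operations needed to
convert `T₁` into `T₂` (as unordered trees). -/
noncomputable def idist (T₁ T₂ : HCTree α) : ℕ :=
  sInf {k : ℕ | ∃ f : ℕ → HCTree α, f 0 = T₁ ∧ TEq (f k) T₂ ∧
    ∀ i < k, IStep (f i) (f (i + 1))}

/-- The total cost of all merges of `T`: the sum over internal nodes, with
children leaf sets `A`, `B`, of `(|A|+|B|)·w(A,B)`. -/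
noncomputable def mergeCostSum (w : α → α → ℝ) : HCTree α → ℝ
  | leaf _ => 0
  | node l r => mergeCostSum w l + mergeCostSum w r
      + ((l.leaves.card : ℝ) + (r.leaves.card : ℝ)) * wSet w l.leaves r.leaves

/-- The total revenue of all merges of `T` in a tree of order `n`: the sum over
internal nodes, with children leaf sets `A`, `B`, of `(n-|A|-|B|)·w(A,B)`. -/
noncomputable def mergeRevSum (w : α → α → ℝ) (n : ℕ) : HCTree α → ℝ
  | leaf _ => 0
  | node l r => mergeRevSum w n l + mergeRevSum w n r
      + ((n : ℝ) - (l.leaves.card : ℝ) - (r.leaves.card : ℝ)) * wSet w l.leaves r.leaves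

/-- Average similarity between two clusters. -/
noncomputable def sim (w : α → α → ℝ) (A B : Finset α) : ℝ :=
  wSet w A B / ((A.card : ℝ) * (B.card : ℝ))

/-- The forests (partial hierarchies) reachable by the average link algorithm:
start from singletons, and repeatedly merge two clusters of maximal average
similarity. -/
inductive AvgLinkForest [Fintype α] (w : α → α → ℝ) : Finset (HCTree α) → Prop
  | init : AvgLinkForest w (Finset.univ.image (leaf : α → HCTree α))
  | merge {F : Finset (HCTree α)} {A B : HCTree α} :
      AvgLinkForest w F → A ∈ F → B ∈ F → A ≠ B →
      (∀ X ∈ F, ∀ Y ∈ F, X ≠ Y → sim w X.leaves Y.leaves ≤ sim w A.leaves B.leaves) →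
      AvgLinkForest w (insert (node A B) ((F.erase A).erase B))

/-- `T` is produced by some execution of the average link algorithm. -/
def AvgLinkTree [Fintype α] (w : α → α → ℝ) (T : HCTree α) : Prop :=
  AvgLinkForest w {T}

end HCTree

namespace HCTree

variable {α : Type} [DecidableEq α]

lemma TEq.refl' (T : HCTree α) : TEq T T := by
  induction T with
  | leaf a => exact TEq.leaf a
  | node l r ihl ihr => exact TEq.node ihl ihr

lemma TEq.leaves_eq {X Y : HCTree α} (h : TEq X Y) : X.leaves = Y.leaves := by
  induction h with
  | leaf a => rfl
  | node h1 h2 ih1 ih2 => simp [leaves, ih1, ih2]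
  | swap h1 h2 ih1 ih2 => simp [leaves, ih1, ih2, Finset.union_comm]

lemma TEq.proper {X Y : HCTree α} (h : TEq X Y) (hp : X.Proper) : Y.Proper := by
  induction h with
  | leaf a => trivial
  | node h1 h2 ih1 ih2 =>
      obtain ⟨p1, p2, hd⟩ := hp
      exact ⟨ih1 p1, ih2 p2, by rw [← h1.leaves_eq, ← h2.leaves_eq]; exact hd⟩
  | swap h1 h2 ih1 ih2 =>
      obtain ⟨p1, p2, hd⟩ := hp
      exact ⟨ih2 p2, ih1 p1, by rw [← h2.leaves_eq, ← h1.leaves_eq]; exact hd.symm⟩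

lemma TEq_fill {X Y : HCTree α} (h : TEq X Y) :
    ∀ K : Ctx α, TEq (K.fill X) (K.fill Y)
  | Ctx.hole => h
  | Ctx.nodeL K r => .node (TEq_fill h K) (TEq.refl' r)
  | Ctx.nodeR l K => .node (TEq.refl' l) (TEq_fill h K)

/-- Composition of contexts. -/
def Ctx.comp : Ctx α → Ctx α → Ctx α
  | Ctx.hole, K' => K'
  | Ctx.nodeL K r, K' => Ctx.nodeL (Ctx.comp K K') r
  | Ctx.nodeR l K, K' => Ctx.nodeR l (Ctx.comp K K')

lemma Ctx.fill_comp (X : HCTree α) :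
    ∀ K K' : Ctx α, (Ctx.comp K K').fill X = K.fill (K'.fill X)
  | Ctx.hole, K' => rfl
  | Ctx.nodeL K r, K' => by simp [Ctx.comp, Ctx.fill, Ctx.fill_comp X K K']
  | Ctx.nodeR l K, K' => by simp [Ctx.comp, Ctx.fill, Ctx.fill_comp X K K']

lemma Interchange_fill {X Y : HCTree α} (K : Ctx α) (h : Interchange X Y) :
    Interchange (K.fill X) (K.fill Y) := by
  obtain ⟨K', A, B, C, h1, h2⟩ := h
  refine ⟨Ctx.comp K K', A, B, C, by rw [Ctx.fill_comp, h1], ?_⟩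
  rcases h2 with h2 | h2
  · exact Or.inl (by rw [Ctx.fill_comp, h2])
  · exact Or.inr (by rw [Ctx.fill_comp, h2])

lemma leaves_fill_congr {X Y : HCTree α} (h : X.leaves = Y.leaves) :
    ∀ K : Ctx α, (K.fill X).leaves = (K.fill Y).leaves
  | Ctx.hole => h
  | Ctx.nodeL K r => by simp [Ctx.fill, leaves, leaves_fill_congr h K]
  | Ctx.nodeR l K => by simp [Ctx.fill, leaves, leaves_fill_congr h K]

lemma Proper_of_fill {X : HCTree α} :
    ∀ K : Ctx α, (K.fill X).Proper → X.Proper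
  | Ctx.hole, h => h
  | Ctx.nodeL K r, h => Proper_of_fill K h.1
  | Ctx.nodeR l K, h => Proper_of_fill K h.2.1

lemma Proper_fill_of {X Y : HCTree α} (hy : Y.Proper) (hl : Y.leaves = X.leaves) :
    ∀ K : Ctx α, (K.fill X).Proper → (K.fill Y).Proper
  | Ctx.hole, _ => hy
  | Ctx.nodeL K r, ⟨h1, h2, h3⟩ =>
      ⟨Proper_fill_of hy hl K h1, h2, by rw [leaves_fill_congr hl K]; exact h3⟩
  | Ctx.nodeR l K, ⟨h1, h2, h3⟩ =>
      ⟨h1, Proper_fill_of hy hl K h2, by rw [leaves_fill_congr hl K]; exact h3⟩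

lemma Interchange.leaves_eq {X Y : HCTree α} (h : Interchange X Y) :
    X.leaves = Y.leaves := by
  obtain ⟨K, A, B, C, rfl, h2⟩ := h
  rcases h2 with rfl | rfl <;>
    · apply leaves_fill_congr _ K
      simp only [leaves]
      ac_rfl

lemma Interchange.proper {X Y : HCTree α} (h : Interchange X Y) (hp : X.Proper) :
    Y.Proper := by
  obtain ⟨K, A, B, C, rfl, h2⟩ := h
  obtain ⟨⟨pA, pB, dAB⟩, pC, dABC⟩ := Proper_of_fill K hp
  simp only [leaves, Finset.disjoint_union_left] at dABC
  obtain ⟨dAC, dBC⟩ := dABC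
  rcases h2 with rfl | rfl
  · have hY : ((A.node C).node B).Proper := by
      refine ⟨⟨pA, pC, dAC⟩, pB, ?_⟩
      simp only [leaves, Finset.disjoint_union_left]
      exact ⟨dAB, dBC.symm⟩
    have hLeq : ((A.node C).node B).leaves = ((A.node B).node C).leaves := by
      simp only [leaves]; ac_rfl
    exact Proper_fill_of hY hLeq K hp
  · have hY : ((C.node B).node A).Proper := by
      refine ⟨⟨pC, pB, dBC.symm⟩, pA, ?_⟩
      simp only [leaves, Finset.disjoint_union_left]
      exact ⟨dAC.symm, dAB.symm⟩
    have hLeq : ((C.node B).node A).leaves = ((A.node B).node C).leaves := by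
      simp only [leaves]; ac_rfl
    exact Proper_fill_of hY hLeq K hp

/-- Total pair weight of a tree, summed over its internal merges. -/
noncomputable def totW (w : α → α → ℝ) : HCTree α → ℝ
  | leaf _ => 0
  | node l r => totW w l + totW w r + wSet w l.leaves r.leaves

lemma pairsSum_union [LinearOrder α] (w : α → α → ℝ) (hsym : ∀ i j, w i j = w j i)
    {A B : Finset α} (hd : Disjoint A B) :
    pairsSum w (A ∪ B) = pairsSum w A + pairsSum w B + wSet w A B := by
  unfold pairsSum wSet
  rw [Finset.sum_union hd]
  simp only [Finset.sum_union hd]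
  rw [Finset.sum_add_distrib, Finset.sum_add_distrib]
  have key : ((∑ i ∈ A, ∑ j ∈ B, if i < j then w i j else 0)
      + ∑ i ∈ B, ∑ j ∈ A, if i < j then w i j else 0) = ∑ i ∈ A, ∑ j ∈ B, w i j := by
    rw [Finset.sum_comm (s := B), ← Finset.sum_add_distrib]
    refine Finset.sum_congr rfl fun i hi => ?_
    rw [← Finset.sum_add_distrib]
    refine Finset.sum_congr rfl fun j hj => ?_
    have hne : i ≠ j := fun h => (Finset.disjoint_left.mp hd hi) (h ▸ hj)
    rcases hne.lt_or_gt with h | h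
    · simp [h, not_lt_of_gt h]
    · simp [h, not_lt_of_gt h, hsym j i]
  linarith

lemma totW_eq_pairsSum [LinearOrder α] (w : α → α → ℝ) (hsym : ∀ i j, w i j = w j i) :
    ∀ T : HCTree α, T.Proper → totW w T = pairsSum w T.leaves := by
  intro T
  induction T with
  | leaf a => intro _; simp [totW, pairsSum, leaves]
  | node l r ihl ihr =>
      rintro ⟨hl, hr, hd⟩
      simp only [totW, leaves]
      rw [pairsSum_union w hsym hd, ihl hl, ihr hr]

lemma mergeRevSum_shift (w : α → α → ℝ) (n m : ℕ) :
    ∀ T : HCTree α, mergeRevSum w n T = mergeRevSum w m T + ((n : ℝ) - m) * totW w T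
  | leaf a => by simp [mergeRevSum, totW]
  | node l r => by
      simp only [mergeRevSum, totW, mergeRevSum_shift w n m l, mergeRevSum_shift w n m r]
      ring

lemma mergeRevSum_fill_sub (w : α → α → ℝ) (n : ℕ) {X Y : HCTree α}
    (h : X.leaves = Y.leaves) :
    ∀ K : Ctx α, mergeRevSum w n (K.fill X) - mergeRevSum w n X
      = mergeRevSum w n (K.fill Y) - mergeRevSum w n Y
  | Ctx.hole => by simp [Ctx.fill]
  | Ctx.nodeL K r => by
      simp only [Ctx.fill, mergeRevSum, leaves_fill_congr h K]
      have := mergeRevSum_fill_sub w n h K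
      linarith
  | Ctx.nodeR l K => by
      simp only [Ctx.fill, mergeRevSum, leaves_fill_congr h K]
      have := mergeRevSum_fill_sub w n h K
      linarith

lemma sum_shift [LinearOrder α] (w : α → α → ℝ) (A : Finset α) (c d : ℝ) (L : α → α → ℕ) :
    (∑ i ∈ A, ∑ j ∈ A, if i < j then w i j * (c - (L i j : ℝ)) else 0)
      = (∑ i ∈ A, ∑ j ∈ A, if i < j then w i j * (d - (L i j : ℝ)) else 0)
        + (c - d) * pairsSum w A := by
  unfold pairsSum
  rw [Finset.mul_sum, ← Finset.sum_add_distrib]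
  refine Finset.sum_congr rfl fun i _ => ?_
  rw [Finset.mul_sum, ← Finset.sum_add_distrib]
  refine Finset.sum_congr rfl fun j _ => ?_
  split_ifs <;> ring

lemma rev_eq_mergeRevSum [LinearOrder α] (w : α → α → ℝ) (hsym : ∀ i j, w i j = w j i) :
    ∀ T : HCTree α, T.Proper → rev w T = mergeRevSum w T.leaves.card T := by
  intro T
  induction T with
  | leaf a => intro _; simp [rev, mergeRevSum, leaves]
  | node l r ihl ihr =>
      rintro ⟨hl, hr, hd⟩
      have hcardn : (node l r).leaves.card = l.leaves.card + r.leaves.card := by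
        simp only [leaves]
        exact Finset.card_union_of_disjoint hd
      have hleq : (node l r).leaves = l.leaves ∪ r.leaves := rfl
      -- compute rev
      have hrev : rev w (node l r)
          = (∑ i ∈ l.leaves, ∑ j ∈ l.leaves,
              if i < j then w i j * (((node l r).leaves.card : ℝ) - (lcaSize l i j : ℝ)) else 0)
            + (∑ i ∈ r.leaves, ∑ j ∈ r.leaves,
              if i < j then w i j * (((node l r).leaves.card : ℝ) - (lcaSize r i j : ℝ)) else 0) := by
        unfold rev
        rw [hleq, Finset.sum_union hd]
        simp only [Finset.sum_union hd]
        rw [Finset.sum_add_distrib, Finset.sum_add_distrib]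
        have hAB : (∑ i ∈ l.leaves, ∑ j ∈ r.leaves,
            if i < j then w i j * (((l.leaves ∪ r.leaves).card : ℝ) - (lcaSize (node l r) i j : ℝ)) else 0) = 0 := by
          refine Finset.sum_eq_zero fun i hi => Finset.sum_eq_zero fun j hj => ?_
          have hjA : j ∉ l.leaves := Finset.disjoint_right.mp hd hj
          have hiB : i ∉ r.leaves := Finset.disjoint_left.mp hd hi
          simp [lcaSize, hjA, hiB]
        have hBA : (∑ i ∈ r.leaves, ∑ j ∈ l.leaves,
            if i < j then w i j * (((l.leaves ∪ r.leaves).card : ℝ) - (lcaSize (node l r) i j : ℝ)) else 0) = 0 := by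
          refine Finset.sum_eq_zero fun i hi => Finset.sum_eq_zero fun j hj => ?_
          have hjB : j ∉ r.leaves := Finset.disjoint_left.mp hd hj
          have hiA : i ∉ l.leaves := Finset.disjoint_right.mp hd hi
          simp [lcaSize, hjB, hiA]
        have hAA : (∑ i ∈ l.leaves, ∑ j ∈ l.leaves,
            if i < j then w i j * (((l.leaves ∪ r.leaves).card : ℝ) - (lcaSize (node l r) i j : ℝ)) else 0)
            = ∑ i ∈ l.leaves, ∑ j ∈ l.leaves,
              if i < j then w i j * (((l.leaves ∪ r.leaves).card : ℝ) - (lcaSize l i j : ℝ)) else 0 := by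
          refine Finset.sum_congr rfl fun i hi => Finset.sum_congr rfl fun j hj => ?_
          simp [lcaSize, hi, hj]
        have hBB : (∑ i ∈ r.leaves, ∑ j ∈ r.leaves,
            if i < j then w i j * (((l.leaves ∪ r.leaves).card : ℝ) - (lcaSize (node l r) i j : ℝ)) else 0)
            = ∑ i ∈ r.leaves, ∑ j ∈ r.leaves,
              if i < j then w i j * (((l.leaves ∪ r.leaves).card : ℝ) - (lcaSize r i j : ℝ)) else 0 := by
          refine Finset.sum_congr rfl fun i hi => Finset.sum_congr rfl fun j hj => ?_
          have hiA : i ∉ l.leaves := Finset.disjoint_right.mp hd hi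
          simp [lcaSize, hiA, hi, hj]
        rw [hAB, hBA, hAA, hBB]
        ring
      rw [hrev, sum_shift w l.leaves ((node l r).leaves.card : ℝ) (l.leaves.card : ℝ) (lcaSize l),
        sum_shift w r.leaves ((node l r).leaves.card : ℝ) (r.leaves.card : ℝ) (lcaSize r)]
      have hrevl : (∑ i ∈ l.leaves, ∑ j ∈ l.leaves,
          if i < j then w i j * ((l.leaves.card : ℝ) - (lcaSize l i j : ℝ)) else 0)
          = rev w l := rfl
      have hrevr : (∑ i ∈ r.leaves, ∑ j ∈ r.leaves,
          if i < j then w i j * ((r.leaves.card : ℝ) - (lcaSize r i j : ℝ)) else 0)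
          = rev w r := rfl
      rw [hrevl, hrevr, ihl hl, ihr hr]
      simp only [mergeRevSum]
      rw [mergeRevSum_shift w (node l r).leaves.card l.leaves.card l,
        mergeRevSum_shift w (node l r).leaves.card r.leaves.card r,
        totW_eq_pairsSum w hsym l hl, totW_eq_pairsSum w hsym r hr]
      have hcast : ((node l r).leaves.card : ℝ) = (l.leaves.card : ℝ) + (r.leaves.card : ℝ) := by
        rw [hcardn]; push_cast; ring
      rw [hcast]
      ring

end HCTree
open HCTree in
/-- every subtree of a locally optimal tree is itself locally
optimal (as an HC tree on its own leaf set, with `w` restricted to it). -/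
theorem locally_optimal_subtree {α : Type} [DecidableEq α] [LinearOrder α]
    (w : α → α → ℝ) (hsym : ∀ i j, w i j = w j i) (hnonneg : ∀ i j, 0 ≤ w i j)
    (T : HCTree α) (hproper : T.Proper) (hopt : T.LocalOpt w)
    (K : Ctx α) (S : HCTree α) (hsub : T = K.fill S) :
    S.LocalOpt w := by
  intro S₀ S₀' hte hint
  subst hsub
  have hps : S.Proper := Proper_of_fill K hproper
  have hle : rev w (K.fill S₀') ≤ rev w (K.fill S) :=
    hopt (K.fill S₀) (K.fill S₀') (TEq_fill hte K) (Interchange_fill K hint)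
  have hl0 : S₀.leaves = S.leaves := hte.leaves_eq.symm
  have hl1 : S₀'.leaves = S.leaves := hint.leaves_eq.symm.trans hl0
  have hp0 : S₀.Proper := hte.proper hps
  have hp1 : S₀'.Proper := hint.proper hp0
  have hPf' : (K.fill S₀').Proper := Proper_fill_of hp1 hl1 K hproper
  set N : ℕ := (K.fill S).leaves.card with hN
  have hNcard : (K.fill S₀').leaves.card = N := by
    rw [leaves_fill_congr hl1 K]
  -- rewrite both sides via mergeRevSum
  rw [rev_eq_mergeRevSum w hsym _ hPf', rev_eq_mergeRevSum w hsym _ hproper, hNcard] at hle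
  have hdiff := mergeRevSum_fill_sub w N hl1.symm K
  have hmono : mergeRevSum w N S₀' ≤ mergeRevSum w N S := by linarith
  have hcard1 : S₀'.leaves.card = S.leaves.card := by rw [hl1]
  rw [rev_eq_mergeRevSum w hsym S₀' hp1, rev_eq_mergeRevSum w hsym S hps,
    mergeRevSum_shift w S₀'.leaves.card N S₀', mergeRevSum_shift w S.leaves.card N S,
    totW_eq_pairsSum w hsym S₀' hp1, totW_eq_pairsSum w hsym S hps, hl1]
  linarith [hmono]
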